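/- arXiv:1012.0222 — 2 statements merged into one kernel-verified Lean document; each statement's English description precedes it below -/
import Mathlib

section
/- Let k be a field of characteristic zero, N > 1, q ∈ k a primitive N-th root of unity, and A a k-algebra. If x, y ∈ A satisfy y·x = q·(x·y) and x^i y^{N−i} = 0 for every 0 ≤ i ≤ N (in particular x^N = 0 and y^N = 0), then exp_q(x + y) = exp_q(x) · exp_q(y). -/
/-- The q-integer `(n)_q = 1 + q + ⋯ + q^{n-1}`. -/
def qNat {k : Type*} [Field k] (q : k) (n : ℕ) : k :=
  ∑ i ∈ Finset.range n, q ^ i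

/-- The q-factorial `(n)!_q = (1)_q (2)_q ⋯ (n)_q`, with `(0)!_q = 1`. -/
def qFact {k : Type*} [Field k] (q : k) (n : ℕ) : k :=
  ∏ i ∈ Finset.range n, qNat q (i + 1)

/-- The truncated q-exponential `exp_q(z) = ∑_{n=0}^{N-1} (1/(n)!_q) · z^n`. -/
noncomputable def qExp {k A : Type*} [Field k] [Ring A] [Algebra k A]
    (q : k) (N : ℕ) (z : A) : A :=
  ∑ n ∈ Finset.range N, (qFact q n)⁻¹ • z ^ n


/-!
With `c n = 1 / (n)!_q`, put `P n = ∑_{i+j=n} c i c j x^i y^j`. Since `y x^i = q^i x^i y` and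
`(i + j)_q = (i)_q + q^i (j)_q`, one gets `(x + y) P n = (n+1)_q P (n+1)`, hence
`c n (x + y)^n = P n` as long as `(n)!_q ≠ 0`, which primitivity of `q` guarantees for `n < N`.
Summing over `n < N` gives `exp_q (x + y)`. On the other side `exp_q x · exp_q y` is the sum of
`c i c j x^i y^j` over `i, j < N`, and the terms with `i + j ≥ N` vanish by the nilpotency
hypothesis, leaving `∑_{n<N} P n` as well.
-/

open Finset

section QExp

variable {k A : Type*} [Field k] [Ring A] [Algebra k A]

lemma qNat_add (q : k) (a b : ℕ) : qNat q (a + b) = qNat q a + q ^ a * qNat q b := by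
  simp only [qNat, sum_range_add, mul_sum, pow_add]

lemma qFact_succ (q : k) (n : ℕ) : qFact q (n + 1) = qFact q n * qNat q (n + 1) :=
  prod_range_succ _ _

lemma qNat_ne_zero_of_pow_ne_one {q : k} {n : ℕ} (h : q ^ n ≠ 1) : qNat q n ≠ 0 := by
  intro h0
  have hgeom := geom_sum_mul q n
  rw [← qNat, h0, zero_mul, eq_comm, sub_eq_zero] at hgeom
  exact h hgeom

lemma IsPrimitiveRoot.qFact_ne_zero {q : k} {N n : ℕ} (hq : IsPrimitiveRoot q N) (hn : n < N) :
    qFact q n ≠ 0 :=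
  prod_ne_zero_iff.mpr fun i hi => qNat_ne_zero_of_pow_ne_one <|
    hq.pow_ne_one_of_pos_of_lt i.succ_ne_zero (by rw [mem_range] at hi; omega)

lemma qFact_ne_zero_of_le {q : k} {m n : ℕ} (h : qFact q n ≠ 0) (hmn : m ≤ n) :
    qFact q m ≠ 0 :=
  prod_ne_zero_iff.mpr fun i hi =>
    prod_ne_zero_iff.mp h i (range_subset_range.mpr hmn hi)

lemma inv_qFact_succ_mul_qNat {q : k} {n : ℕ} (h : qFact q (n + 1) ≠ 0) :
    (qFact q (n + 1))⁻¹ * qNat q (n + 1) = (qFact q n)⁻¹ := by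
  rw [qFact_succ] at h ⊢
  rw [mul_inv, mul_assoc, inv_mul_cancel₀ (right_ne_zero_of_mul h), mul_one]

lemma mul_pow_eq_smul_pow_mul {q : k} {x y : A} (hcomm : y * x = q • (x * y)) (n : ℕ) :
    y * x ^ n = q ^ n • (x ^ n * y) := by
  induction n with
  | zero => simp
  | succ n ih =>
    rw [pow_succ, ← mul_assoc, ih, smul_mul_assoc, mul_assoc, hcomm, mul_smul_comm, smul_smul,
      ← mul_assoc, ← pow_succ, ← pow_succ]

/-- The part of degree `n` of `exp_q x * exp_q y`. -/
noncomputable def qExpProdPart (q : k) (x y : A) (n : ℕ) : A :=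
  ∑ p ∈ antidiagonal n, ((qFact q p.1)⁻¹ * (qFact q p.2)⁻¹) • (x ^ p.1 * y ^ p.2)

lemma add_mul_qExpProdPart {q : k} {x y : A} (hcomm : y * x = q • (x * y)) {n : ℕ}
    (h : qFact q (n + 1) ≠ 0) :
    (x + y) * qExpProdPart q x y n = qNat q (n + 1) • qExpProdPart q x y (n + 1) := by
  have hx : x * qExpProdPart q x y n = ∑ p ∈ antidiagonal n,
      (qNat q (p.1 + 1) * (qFact q (p.1 + 1))⁻¹ * (qFact q p.2)⁻¹) •
        (x ^ (p.1 + 1) * y ^ p.2) := by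
    rw [qExpProdPart, mul_sum]
    refine sum_congr rfl fun p hp => ?_
    have hp1 : p.1 + 1 ≤ n + 1 := by rw [HasAntidiagonal.mem_antidiagonal] at hp; omega
    rw [mul_comm (qNat q _), inv_qFact_succ_mul_qNat (qFact_ne_zero_of_le h hp1), mul_smul_comm,
      ← mul_assoc, ← pow_succ']
  have hy : y * qExpProdPart q x y n = ∑ p ∈ antidiagonal n,
      (q ^ p.1 * qNat q (p.2 + 1) * (qFact q p.1)⁻¹ * (qFact q (p.2 + 1))⁻¹) •
        (x ^ p.1 * y ^ (p.2 + 1)) := by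
    rw [qExpProdPart, mul_sum]
    refine sum_congr rfl fun p hp => ?_
    have hp2 : p.2 + 1 ≤ n + 1 := by rw [HasAntidiagonal.mem_antidiagonal] at hp; omega
    have hc : q ^ p.1 * qNat q (p.2 + 1) * (qFact q p.1)⁻¹ * (qFact q (p.2 + 1))⁻¹ =
        q ^ p.1 * ((qFact q p.1)⁻¹ * (qFact q p.2)⁻¹) := by
      rw [← inv_qFact_succ_mul_qNat (qFact_ne_zero_of_le h hp2)]
      ring
    rw [hc, mul_smul_comm, ← mul_assoc, mul_pow_eq_smul_pow_mul hcomm, smul_mul_assoc, mul_assoc,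
      ← pow_succ', smul_smul, mul_comm]
  calc (x + y) * qExpProdPart q x y n
      = ∑ p ∈ antidiagonal (n + 1),
          (qNat q p.1 * (qFact q p.1)⁻¹ * (qFact q p.2)⁻¹) • (x ^ p.1 * y ^ p.2) +
        ∑ p ∈ antidiagonal (n + 1),
          (q ^ p.1 * qNat q p.2 * (qFact q p.1)⁻¹ * (qFact q p.2)⁻¹) • (x ^ p.1 * y ^ p.2) := by
        rw [add_mul, hx, hy, Nat.sum_antidiagonal_succ, Nat.sum_antidiagonal_succ']
        simp [qNat]
    _ = qNat q (n + 1) • qExpProdPart q x y (n + 1) := by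
        rw [qExpProdPart, smul_sum, ← sum_add_distrib]
        refine sum_congr rfl fun p hp => ?_
        rw [← add_smul, smul_smul, ← HasAntidiagonal.mem_antidiagonal.mp hp, qNat_add]
        congr 1
        ring

lemma inv_qFact_smul_add_pow {q : k} {x y : A} (hcomm : y * x = q • (x * y)) {n : ℕ}
    (h : qFact q n ≠ 0) : (qFact q n)⁻¹ • (x + y) ^ n = qExpProdPart q x y n := by
  induction n with
  | zero => simp [qExpProdPart, qFact]
  | succ n ih =>
    have hqNat : qNat q (n + 1) ≠ 0 := by
      rw [qFact_succ] at h
      exact right_ne_zero_of_mul h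
    rw [qFact_succ, mul_inv, mul_comm, ← smul_smul, pow_succ', ← mul_smul_comm,
      ih (qFact_ne_zero_of_le h n.le_succ), add_mul_qExpProdPart hcomm h, smul_smul,
      inv_mul_cancel₀ hqNat, one_smul]

lemma qExp_mul_qExp (q : k) {N : ℕ} {x y : A} (hnil : ∀ i ≤ N, x ^ i * y ^ (N - i) = 0) :
    qExp q N x * qExp q N y = ∑ n ∈ range N, qExpProdPart q x y n := by
  have hvanish : ∀ i j, i ≤ N → N ≤ i + j → x ^ i * y ^ j = 0 := by
    intro i j hi hij
    rw [← Nat.add_sub_of_le (show N - i ≤ j by omega), pow_add, ← mul_assoc, hnil i hi, zero_mul]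
  set f : ℕ → ℕ → A := fun i j => ((qFact q i)⁻¹ * (qFact q j)⁻¹) • (x ^ i * y ^ j)
  have hP : ∀ n, qExpProdPart q x y n = ∑ i ∈ range (n + 1), f i (n - i) :=
    Nat.sum_antidiagonal_eq_sum_range_succ f
  simp only [hP, sum_range_diag_flip N f, qExp, sum_mul_sum, smul_mul_smul_comm]
  refine sum_congr rfl fun i hi => (sum_subset (range_subset_range.mpr (N.sub_le i)) ?_).symm
  intro j _ hj
  rw [mem_range] at hi hj
  rw [hvanish i j hi.le (by omega), smul_zero]

end QExp

theorem stmt_2_general {k A : Type*} [Field k] [Ring A] [Algebra k A]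
    (N : ℕ) (q : k) (hq : IsPrimitiveRoot q N)
    (x y : A) (hcomm : y * x = q • (x * y))
    (hnil : ∀ i ≤ N, x ^ i * y ^ (N - i) = 0) :
    qExp q N (x + y) = qExp q N x * qExp q N y := by
  rw [qExp_mul_qExp q hnil, qExp]
  exact sum_congr rfl fun n hn =>
    inv_qFact_smul_add_pow hcomm (hq.qFact_ne_zero (mem_range.mp hn))

theorem stmt_2 {k A : Type*} [Field k] [CharZero k] [Ring A] [Algebra k A]
    (N : ℕ) (hN : 1 < N) (q : k) (hq : IsPrimitiveRoot q N)
    (x y : A) (hcomm : y * x = q • (x * y))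
    (hnil : ∀ i ≤ N, x ^ i * y ^ (N - i) = 0) :
    qExp q N (x + y) = qExp q N x * qExp q N y :=
  stmt_2_general N q hq x y hcomm hnil
end

section
/- Let k be a field, H a bialgebra over k, u ∈ H a grouplike element with u² = 1, and x, y ∈ H elements with Δ(x) = x⊗1 + u⊗x, Δ(y) = y⊗1 + u⊗y, x² = 0, y² = 0, x·y = −y·x, u·x = −x·u, and u·y = −y·u. Fix a ∈ k and set c = 1 + a·x·y ∈ H. Then c is invertible with c^{−1} = 1 − a·x·y, and in the algebra H ⊗ H one has Δ(c)·(c^{−1} ⊗ c^{−1}) = 1⊗1 + a·(xu)⊗y − a·(yu)⊗x − a²·(xy)⊗(xy). In particular, if H is a Hopf algebra, the element 1⊗1 + a·(xu)⊗y − a·(yu)⊗x − a²·(xy)⊗(xy) is a Drinfeld twist for H, gauge-equivalent to the trivial twist 1⊗1. -/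
open scoped TensorProduct

noncomputable section

variable (k H : Type*) [Field k] [Ring H] [Bialgebra k H]

/-- A grouplike element: `Δ(g) = g ⊗ g` and `ε(g) = 1`. -/
def IsGrouplike (g : H) : Prop :=
  Coalgebra.counit (R := k) g = 1 ∧ Coalgebra.comul (R := k) g = g ⊗ₜ[k] g

/-- `Δ ⊗ id : H ⊗ H → H ⊗ H ⊗ H` (with `H ⊗ H ⊗ H = H ⊗ (H ⊗ H)`). -/
def comul12 : (H ⊗[k] H) →ₗ[k] H ⊗[k] (H ⊗[k] H) :=
  (TensorProduct.assoc k H H H).toLinearMap ∘ₗ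
    TensorProduct.map (Coalgebra.comul (R := k) (A := H)) LinearMap.id

/-- `id ⊗ Δ : H ⊗ H → H ⊗ H ⊗ H`. -/
def comul23 : (H ⊗[k] H) →ₗ[k] H ⊗[k] (H ⊗[k] H) :=
  TensorProduct.map LinearMap.id (Coalgebra.comul (R := k) (A := H))

/-- `ε ⊗ id : H ⊗ H → H`. -/
def counitL : (H ⊗[k] H) →ₗ[k] H :=
  (TensorProduct.lid k H).toLinearMap ∘ₗ
    TensorProduct.map (Coalgebra.counit (R := k) (A := H)) LinearMap.id

/-- `id ⊗ ε : H ⊗ H → H`. -/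
def counitR : (H ⊗[k] H) →ₗ[k] H :=
  (TensorProduct.rid k H).toLinearMap ∘ₗ
    TensorProduct.map LinearMap.id (Coalgebra.counit (R := k) (A := H))

/-- The element `J ⊗ 1` of `H ⊗ (H ⊗ H)`. -/
def tmulOne (J : H ⊗[k] H) : H ⊗[k] (H ⊗[k] H) :=
  TensorProduct.assoc k H H H (J ⊗ₜ[k] (1 : H))

/-- A Drinfeld twist: an invertible `J ∈ H ⊗ H` with
`(Δ⊗id)(J)·(J⊗1) = (id⊗Δ)(J)·(1⊗J)` and `(ε⊗id)(J) = 1 = (id⊗ε)(J)`.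
(The definition only uses the bialgebra structure; for a Hopf algebra it is the
usual notion of Drinfeld twist.) -/
def IsDrinfeldTwist (J : H ⊗[k] H) : Prop :=
  IsUnit J ∧
  comul12 k H J * tmulOne k H J = comul23 k H J * ((1 : H) ⊗ₜ[k] J) ∧
  counitL k H J = 1 ∧ counitR k H J = 1

/-- `J'` is gauge equivalent to `J` if `J' = Δ(c)·J·(c⁻¹ ⊗ c⁻¹)` for some
invertible `c` with `ε(c) = 1`. -/
def GaugeEquiv (J J' : H ⊗[k] H) : Prop :=
  ∃ c ci : H, c * ci = 1 ∧ ci * c = 1 ∧ Coalgebra.counit (R := k) c = 1 ∧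
    J' = Coalgebra.comul (R := k) c * J * (ci ⊗ₜ[k] ci)

/-!
Write `w = x y`. The (anti)commutation relations make `w` square to zero and be killed on the
left by `x`, `y`, `x u` and `y u`; hence `c = 1 + a w` has inverse `1 - a w`, and right
multiplication by `c⁻¹` fixes `x`, `y`, `x u`, `y u` and `w`. From `Δ(w) = w ⊗ 1 + x u ⊗ y -
y u ⊗ x + 1 ⊗ w` one gets `Δ(c) = c ⊗ c + a (x u ⊗ y - y u ⊗ x) - a² w ⊗ w`, and multiplying by
`c⁻¹ ⊗ c⁻¹` only turns `c ⊗ c` into `1 ⊗ 1`.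

For any invertible `c` with `ε(c) = 1`, the element `Δ(c) (c⁻¹ ⊗ c⁻¹)` is a twist: both sides of
the twist equation collapse to `Δ⁽²⁾(c) (c⁻¹ ⊗ c⁻¹ ⊗ c⁻¹)`, and they agree by coassociativity.
-/
theorem one_add_mul_one_sub_of_mul_self_eq_zero {R : Type*} [Ring R] {z : R} (h : z * z = 0) :
    (1 + z) * (1 - z) = 1 := by
  rw [← (Commute.one_left z).mul_self_sub_mul_self_eq, one_mul, h, sub_zero]

theorem one_sub_mul_one_add_of_mul_self_eq_zero {R : Type*} [Ring R] {z : R} (h : z * z = 0) :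
    (1 - z) * (1 + z) = 1 := by
  rw [← (Commute.one_left z).mul_self_sub_mul_self_eq', one_mul, h, sub_zero]

section Anticommuting

variable {A : Type*} [Ring A] {x y : A}

theorem mul_mul_eq_zero_of_anticomm (hxy : x * y = -(y * x)) (hy2 : y ^ 2 = 0) :
    y * (x * y) = 0 :=
  calc y * (x * y) = -(x * y * y) := by rw [← mul_assoc, ← neg_neg (y * x), ← hxy, neg_mul]
    _ = 0 := by rw [mul_assoc, ← sq, hy2, mul_zero, neg_zero]

theorem mul_self_eq_zero_of_anticomm (hxy : x * y = -(y * x)) (hy2 : y ^ 2 = 0) :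
    x * y * (x * y) = 0 := by
  rw [mul_assoc, mul_mul_eq_zero_of_anticomm hxy hy2, mul_zero]

end Anticommuting

section SkewPrimitive

open Coalgebra TensorProduct

variable {R A : Type*}

theorem comul_mul_of_comul_eq_add_tmul [CommSemiring R] [Semiring A] [Bialgebra R A]
    {g x y : A} (hx : comul (R := R) x = x ⊗ₜ[R] 1 + g ⊗ₜ[R] x)
    (hy : comul (R := R) y = y ⊗ₜ[R] 1 + g ⊗ₜ[R] y) :
    comul (R := R) (x * y) =
      (x * y) ⊗ₜ[R] 1 + (x * g) ⊗ₜ[R] y + (g * y) ⊗ₜ[R] x + (g * g) ⊗ₜ[R] (x * y) := by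
  rw [Bialgebra.comul_mul, hx, hy]
  simp only [add_mul, mul_add, Algebra.TensorProduct.tmul_mul_tmul, mul_one, one_mul]
  abel

theorem counit_eq_one_of_mul_eq_one [CommSemiring R] [Semiring A] [Bialgebra R A] {c ci : A}
    (h : ci * c = 1) (hc : counit (R := R) c = 1) : counit (R := R) ci = 1 := by
  have h' := Bialgebra.counit_mul (R := R) ci c
  rwa [h, Bialgebra.counit_one, hc, mul_one, eq_comm] at h'

variable [CommRing R] [Ring A] [Bialgebra R A] {u x y : A}

theorem counit_eq_zero_of_comul_eq_add_tmul (hu : counit (R := R) u = 1)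
    (hx : comul (R := R) x = x ⊗ₜ[R] 1 + u ⊗ₜ[R] x) : counit (R := R) x = 0 := by
  have h := rTensor_counit_comul (R := R) x
  rw [hx, map_add, LinearMap.rTensor_tmul, LinearMap.rTensor_tmul, hu, add_eq_right] at h
  simpa using congrArg (fun t => counit (R := R) (TensorProduct.lid R A t)) h

theorem comul_one_add_smul_mul (hu2 : u ^ 2 = 1)
    (hx : comul (R := R) x = x ⊗ₜ[R] 1 + u ⊗ₜ[R] x)
    (hy : comul (R := R) y = y ⊗ₜ[R] 1 + u ⊗ₜ[R] y) (huy : u * y = -(y * u)) (a : R) :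
    comul (R := R) (1 + a • (x * y)) =
      (1 + a • (x * y)) ⊗ₜ[R] (1 + a • (x * y)) + a • ((x * u) ⊗ₜ[R] y)
        - a • ((y * u) ⊗ₜ[R] x) - a ^ 2 • ((x * y) ⊗ₜ[R] (x * y)) := by
  rw [map_add, map_smul, Bialgebra.comul_one, comul_mul_of_comul_eq_add_tmul hx hy, huy, ← sq, hu2,
    Algebra.TensorProduct.one_def]
  simp only [add_tmul, tmul_add, neg_tmul, ← smul_tmul', tmul_smul, smul_add, smul_smul]
  module

theorem comul_one_add_smul_mul_mul_tmul (hu2 : u ^ 2 = 1)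
    (hx : comul (R := R) x = x ⊗ₜ[R] 1 + u ⊗ₜ[R] x)
    (hy : comul (R := R) y = y ⊗ₜ[R] 1 + u ⊗ₜ[R] y)
    (hx2 : x ^ 2 = 0) (hy2 : y ^ 2 = 0) (hxy : x * y = -(y * x))
    (hux : u * x = -(x * u)) (huy : u * y = -(y * u)) (a : R) :
    comul (R := R) (1 + a • (x * y)) * ((1 - a • (x * y)) ⊗ₜ[R] (1 - a • (x * y))) =
      1 + a • ((x * u) ⊗ₜ[R] y) - a • ((y * u) ⊗ₜ[R] x) - a ^ 2 • ((x * y) ⊗ₜ[R] (x * y)) := by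
  have hyw := mul_mul_eq_zero_of_anticomm hxy hy2
  have hww := mul_self_eq_zero_of_anticomm hxy hy2
  have hxw : x * (x * y) = 0 := by rw [← mul_assoc, ← sq, hx2, zero_mul]
  have hxuw : x * u * (x * y) = 0 :=
    calc x * u * (x * y) = x * (u * x) * y := by noncomm_ring
      _ = -(x ^ 2 * (u * y)) := by rw [hux]; noncomm_ring
      _ = 0 := by rw [hx2, zero_mul, neg_zero]
  have hyuw : y * u * (x * y) = 0 :=
    calc y * u * (x * y) = y * (u * x) * y := by noncomm_ring
      _ = -(y * x * (u * y)) := by rw [hux]; noncomm_ring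
      _ = y * (x * y) * u := by rw [huy]; noncomm_ring
      _ = 0 := by rw [hyw, zero_mul]
  have absorb : ∀ z : A, z * (x * y) = 0 → z * (1 - a • (x * y)) = z := fun z hz => by
    rw [mul_sub, mul_one, mul_smul_comm, hz, smul_zero, sub_zero]
  have hc : (1 + a • (x * y)) * (1 - a • (x * y)) = 1 :=
    one_add_mul_one_sub_of_mul_self_eq_zero (by rw [smul_mul_smul_comm, hww, smul_zero])
  rw [comul_one_add_smul_mul hu2 hx hy huy, sub_mul, sub_mul, add_mul]
  simp only [smul_mul_assoc, Algebra.TensorProduct.tmul_mul_tmul, hc, absorb _ hxw, absorb _ hyw,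
    absorb _ hww, absorb _ hxuw, absorb _ hyuw]
  rfl

end SkewPrimitive

section Gauge

open Coalgebra

variable {k H}

theorem comul12_mul (p q : H ⊗[k] H) :
    comul12 k H (p * q) = comul12 k H p * comul12 k H q := by
  have : comul12 k H = ((Algebra.TensorProduct.assoc k k k H H H).toAlgHom.comp
      (Algebra.TensorProduct.map (Bialgebra.comulAlgHom k H) (AlgHom.id k H))).toLinearMap := by
    ext; rfl
  simp only [this, AlgHom.toLinearMap_apply, map_mul]

theorem comul23_mul (p q : H ⊗[k] H) :
    comul23 k H (p * q) = comul23 k H p * comul23 k H q := by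
  have : comul23 k H =
      (Algebra.TensorProduct.map (AlgHom.id k H) (Bialgebra.comulAlgHom k H)).toLinearMap := by
    ext; rfl
  simp only [this, AlgHom.toLinearMap_apply, map_mul]

theorem counitL_mul (p q : H ⊗[k] H) :
    counitL k H (p * q) = counitL k H p * counitL k H q := by
  have : counitL k H = ((Algebra.TensorProduct.lid k H).toAlgHom.comp
      (Algebra.TensorProduct.map (Bialgebra.counitAlgHom k H) (AlgHom.id k H))).toLinearMap := by
    ext; rfl
  simp only [this, AlgHom.toLinearMap_apply, map_mul]

theorem counitR_mul (p q : H ⊗[k] H) :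
    counitR k H (p * q) = counitR k H p * counitR k H q := by
  have : counitR k H = ((Algebra.TensorProduct.rid k k H).toAlgHom.comp
      (Algebra.TensorProduct.map (AlgHom.id k H) (Bialgebra.counitAlgHom k H))).toLinearMap := by
    ext; rfl
  simp only [this, AlgHom.toLinearMap_apply, map_mul]

theorem comul12_tmul (a b : H) :
    comul12 k H (a ⊗ₜ[k] b) = Algebra.TensorProduct.assoc k k k H H H (comul a ⊗ₜ[k] b) :=
  rfl

theorem tmulOne_eq (p : H ⊗[k] H) :
    tmulOne k H p = Algebra.TensorProduct.assoc k k k H H H (p ⊗ₜ[k] 1) :=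
  rfl

theorem tmulOne_mul (p q : H ⊗[k] H) :
    tmulOne k H (p * q) = tmulOne k H p * tmulOne k H q := by
  rw [tmulOne_eq, tmulOne_eq, tmulOne_eq, ← map_mul, Algebra.TensorProduct.tmul_mul_tmul, mul_one]

theorem counitL_tmul (a b : H) : counitL k H (a ⊗ₜ[k] b) = counit (R := k) a • b := by
  simp [counitL]

theorem counitR_tmul (a b : H) : counitR k H (a ⊗ₜ[k] b) = counit (R := k) b • a := by
  simp [counitR]

theorem counitL_comul (a : H) : counitL k H (comul a) = a := by
  simp [counitL, ← LinearMap.rTensor_def, rTensor_counit_comul]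

theorem counitR_comul (a : H) : counitR k H (comul a) = a := by
  simp [counitR, ← LinearMap.lTensor_def, lTensor_counit_comul]

theorem comul12_comul (a : H) : comul12 k H (comul a) = comul23 k H (comul a) := by
  simpa [comul12, comul23, LinearMap.rTensor, LinearMap.lTensor] using coassoc_apply (R := k) a

variable {c ci : H}

theorem isUnit_comul_mul_tmul (h1 : c * ci = 1) (h2 : ci * c = 1) :
    IsUnit (comul (R := k) c * (ci ⊗ₜ[k] ci)) := by
  have hc : IsUnit (comul (R := k) c) :=
    (Units.isUnit ⟨c, ci, h1, h2⟩).map (Bialgebra.comulAlgHom k H)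
  exact hc.mul ⟨⟨ci ⊗ₜ[k] ci, c ⊗ₜ[k] c, by rw [Algebra.TensorProduct.tmul_mul_tmul, h2]; rfl,
    by rw [Algebra.TensorProduct.tmul_mul_tmul, h1]; rfl⟩, rfl⟩

theorem comul12_mul_tmulOne_comul_mul_tmul (h : ci * c = 1) :
    comul12 k H (comul c * (ci ⊗ₜ[k] ci)) * tmulOne k H (comul c * (ci ⊗ₜ[k] ci)) =
      comul12 k H (comul c) * (ci ⊗ₜ[k] (ci ⊗ₜ[k] ci)) := by
  have key : comul12 k H (ci ⊗ₜ[k] ci) * (tmulOne k H (comul c) * tmulOne k H (ci ⊗ₜ[k] ci)) =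
      ci ⊗ₜ[k] (ci ⊗ₜ[k] ci) := by
    rw [comul12_tmul, tmulOne_eq, tmulOne_eq, ← map_mul, ← map_mul]
    simp [Algebra.TensorProduct.tmul_mul_tmul, ← mul_assoc, ← Bialgebra.comul_mul, h]
  rw [comul12_mul, tmulOne_mul, mul_assoc, key]

theorem comul23_mul_one_tmul_comul_mul_tmul (h : ci * c = 1) :
    comul23 k H (comul c * (ci ⊗ₜ[k] ci)) * ((1 : H) ⊗ₜ[k] (comul c * (ci ⊗ₜ[k] ci))) =
      comul23 k H (comul c) * (ci ⊗ₜ[k] (ci ⊗ₜ[k] ci)) := by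
  rw [comul23_mul, mul_assoc]
  simp [comul23, Algebra.TensorProduct.tmul_mul_tmul, ← mul_assoc, ← Bialgebra.comul_mul, h]

theorem isDrinfeldTwist_comul_mul_tmul (h1 : c * ci = 1) (h2 : ci * c = 1)
    (hc : counit (R := k) c = 1) :
    IsDrinfeldTwist k H (comul (R := k) c * (ci ⊗ₜ[k] ci)) := by
  have hci := counit_eq_one_of_mul_eq_one (R := k) h2 hc
  refine ⟨isUnit_comul_mul_tmul h1 h2, ?_, ?_, ?_⟩
  · rw [comul12_mul_tmulOne_comul_mul_tmul h2, comul23_mul_one_tmul_comul_mul_tmul h2,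
      comul12_comul]
  · rw [counitL_mul, counitL_comul, counitL_tmul, hci, one_smul, h1]
  · rw [counitR_mul, counitR_comul, counitR_tmul, hci, one_smul, h1]

end Gauge

/-- For `c = 1 + a·x·y`: `c` is invertible with inverse `1 - a·x·y`,
`Δ(c)·(c⁻¹ ⊗ c⁻¹) = 1⊗1 + a·(xu)⊗y - a·(yu)⊗x - a²·(xy)⊗(xy)`, and this element
is a Drinfeld twist gauge equivalent to the trivial twist `1⊗1` (in particular,
for a Hopf algebra `H`, a Drinfeld twist in the usual sense). -/
theorem stmt_14 (u x y : H) (hu : IsGrouplike k H u) (hu2 : u ^ 2 = 1)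
    (hx : Coalgebra.comul (R := k) x = x ⊗ₜ[k] (1 : H) + u ⊗ₜ[k] x)
    (hy : Coalgebra.comul (R := k) y = y ⊗ₜ[k] (1 : H) + u ⊗ₜ[k] y)
    (hx2 : x ^ 2 = 0) (hy2 : y ^ 2 = 0) (hxy : x * y = -(y * x))
    (hux : u * x = -(x * u)) (huy : u * y = -(y * u)) (a : k) :
    ((1 + a • (x * y)) * (1 - a • (x * y)) = 1 ∧
      (1 - a • (x * y)) * (1 + a • (x * y)) = 1) ∧
    Coalgebra.comul (R := k) (1 + a • (x * y)) *
        ((1 - a • (x * y)) ⊗ₜ[k] (1 - a • (x * y))) =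
      1 + a • ((x * u) ⊗ₜ[k] y) - a • ((y * u) ⊗ₜ[k] x)
        - (a ^ 2) • ((x * y) ⊗ₜ[k] (x * y)) ∧
    IsDrinfeldTwist k H (1 + a • ((x * u) ⊗ₜ[k] y) - a • ((y * u) ⊗ₜ[k] x)
      - (a ^ 2) • ((x * y) ⊗ₜ[k] (x * y))) ∧
    GaugeEquiv k H 1 (1 + a • ((x * u) ⊗ₜ[k] y) - a • ((y * u) ⊗ₜ[k] x)
      - (a ^ 2) • ((x * y) ⊗ₜ[k] (x * y))) := by
  have hnil : a • (x * y) * (a • (x * y)) = 0 := by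
    rw [smul_mul_smul_comm, mul_self_eq_zero_of_anticomm hxy hy2, smul_zero]
  have hinv := one_add_mul_one_sub_of_mul_self_eq_zero hnil
  have hinv' := one_sub_mul_one_add_of_mul_self_eq_zero hnil
  have hcounit : Coalgebra.counit (R := k) (1 + a • (x * y)) = 1 := by
    rw [map_add, Bialgebra.counit_one, map_smul, Bialgebra.counit_mul,
      counit_eq_zero_of_comul_eq_add_tmul hu.1 hx, zero_mul, smul_zero, add_zero]
  have hJ := comul_one_add_smul_mul_mul_tmul hu2 hx hy hx2 hy2 hxy hux huy a
  refine ⟨⟨hinv, hinv'⟩, hJ, hJ ▸ isDrinfeldTwist_comul_mul_tmul hinv hinv' hcounit,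
    _, _, hinv, hinv', hcounit, ?_⟩
  rw [mul_one, hJ]
end
end
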